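/- arXiv:0807.3076 — 2 statements merged into one kernel-verified Lean document; each statement's English description precedes it below -/
import Mathlib

section
/- For f, g : ℝ → ℝ continuous and ε > 0, the ε-scale derivative satisfies the generalized Leibniz rule: □_ε(f·g)(x) = □_ε f(x) · g(x) + f(x) · □_ε g(x) + (iε/2)·(□_ε f(x)·□_ε g(x) − conj(□_ε f(x))·□_ε g(x) − □_ε f(x)·conj(□_ε g(x)) − conj(□_ε f(x))·conj(□_ε g(x))). -/
open Filter Topology

noncomputable def deltaP (f : ℝ → ℝ) (ε x : ℝ) : ℝ := (f (x + ε) - f x) / ε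

noncomputable def deltaM (f : ℝ → ℝ) (ε x : ℝ) : ℝ := -(f (x - ε) - f x) / ε

noncomputable def scaleDeriv (f : ℝ → ℝ) (ε x : ℝ) : ℂ :=
  (((deltaP f ε x + deltaM f ε x) / 2 : ℝ) : ℂ)
    - Complex.I * (((deltaP f ε x - deltaM f ε x) / 2 : ℝ) : ℂ)

noncomputable def scaleDerivC (g : ℝ → ℂ) (ε x : ℝ) : ℂ :=
  scaleDeriv (fun t => (g t).re) ε x + Complex.I * scaleDeriv (fun t => (g t).im) ε x

/-!
With `a, b` the forward and backward quotients of `f` and `c, d` those of `g`, the discrete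
product rules read `Δ⁺(fg) = a g + f c + ε a c` and `Δ⁻(fg) = b g + f d - ε b d`. Since
`□_ε` is the ℂ-linear combination `(1 - i)/2 · Δ⁺ + (1 + i)/2 · Δ⁻` (and its conjugate swaps the
two coefficients), the theorem reduces to an identity in `a, b, c, d` and `i² = -1`.
-/

open Complex

section DiscreteProductRule

variable (f g : ℝ → ℝ) (ε x : ℝ)

theorem deltaP_mul :
    deltaP (fun t => f t * g t) ε x =
      deltaP f ε x * g x + f x * deltaP g ε x + ε * deltaP f ε x * deltaP g ε x := by
  -- at `ε = 0` both sides are `0`, the quotients being junk values `_ / 0 = 0`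
  rcases eq_or_ne ε 0 with rfl | hε
  · simp [deltaP]
  · simp only [deltaP]
    field_simp
    ring

theorem deltaM_mul :
    deltaM (fun t => f t * g t) ε x =
      deltaM f ε x * g x + f x * deltaM g ε x - ε * deltaM f ε x * deltaM g ε x := by
  rcases eq_or_ne ε 0 with rfl | hε
  · simp [deltaM]
  · simp only [deltaM]
    field_simp
    ring

end DiscreteProductRule

theorem scaleDeriv_eq (f : ℝ → ℝ) (ε x : ℝ) :
    scaleDeriv f ε x = (1 - I) / 2 * deltaP f ε x + (1 + I) / 2 * deltaM f ε x := by
  simp only [scaleDeriv]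
  push_cast
  ring

theorem conj_scaleDeriv (f : ℝ → ℝ) (ε x : ℝ) :
    starRingEnd ℂ (scaleDeriv f ε x) =
      (1 + I) / 2 * deltaP f ε x + (1 - I) / 2 * deltaM f ε x := by
  simp only [scaleDeriv_eq, map_add, map_mul, map_div₀, map_sub, map_one, map_ofNat, conj_I,
    conj_ofReal]
  ring

theorem stmt_3_general (f g : ℝ → ℝ)
    (ε : ℝ) (x : ℝ) :
    scaleDeriv (fun t => f t * g t) ε x =
      scaleDeriv f ε x * (g x : ℂ) + (f x : ℂ) * scaleDeriv g ε x +
        Complex.I * (ε : ℂ) / 2 *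
          (scaleDeriv f ε x * scaleDeriv g ε x
            - (starRingEnd ℂ) (scaleDeriv f ε x) * scaleDeriv g ε x
            - scaleDeriv f ε x * (starRingEnd ℂ) (scaleDeriv g ε x)
            - (starRingEnd ℂ) (scaleDeriv f ε x) * (starRingEnd ℂ) (scaleDeriv g ε x)) := by
  rw [conj_scaleDeriv f, conj_scaleDeriv g, scaleDeriv_eq (fun t => f t * g t), deltaP_mul,
    deltaM_mul, scaleDeriv_eq f, scaleDeriv_eq g]
  set a : ℂ := (deltaP f ε x : ℂ)
  set b : ℂ := (deltaM f ε x : ℂ)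
  set c : ℂ := (deltaP g ε x : ℂ)
  set d : ℂ := (deltaM g ε x : ℂ)
  push_cast
  linear_combination (ε / 4 * (2 * (a * c - b * d) - (a - b) * (c - d) * I)) * I_sq

theorem stmt_3 (f g : ℝ → ℝ) (hf : Continuous f) (hg : Continuous g)
    (ε : ℝ) (hε : 0 < ε) (x : ℝ) :
    scaleDeriv (fun t => f t * g t) ε x =
      scaleDeriv f ε x * (g x : ℂ) + (f x : ℂ) * scaleDeriv g ε x +
        Complex.I * (ε : ℂ) / 2 *
          (scaleDeriv f ε x * scaleDeriv g ε x
            - (starRingEnd ℂ) (scaleDeriv f ε x) * scaleDeriv g ε x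
            - scaleDeriv f ε x * (starRingEnd ℂ) (scaleDeriv g ε x)
            - (starRingEnd ℂ) (scaleDeriv f ε x) * (starRingEnd ℂ) (scaleDeriv g ε x)) :=
  stmt_3_general f g ε x
end

section
/- Let f(x) = |x| and ε > 0. For all x with |x| ≥ ε, the ε-scale derivative □_ε f(x) is real and equals sign(x); for |x| < ε it has nonzero imaginary part equal to −(ε−|x|)/ε. Consequently, □_ε f(x) → sign(x) pointwise as ε → 0⁺ for every x ≠ 0, while □_ε f(0) = −i for every ε > 0. -/
open Filter Topology

/-! On `|x| ≥ ε` the function `|·|` is linear with slope `sign x` on `[x - ε, x + ε]`, so both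
one-sided quotients equal `sign x` and the imaginary part `-(Δ⁺ - Δ⁻)/2` vanishes. On `|x| < ε`
the kink at `0` lies inside that interval, and `|x + ε| + |x - ε| = 2ε` makes `Δ⁺ - Δ⁻`
equal to `2(ε - |x|)/ε`. The limit `ε → 0⁺` at `x ≠ 0` is eventually constant. -/

section ScaleDeriv

variable (f : ℝ → ℝ) (ε x : ℝ)

theorem scaleDeriv_re : (scaleDeriv f ε x).re = (deltaP f ε x + deltaM f ε x) / 2 := by
  simp [scaleDeriv]

theorem scaleDeriv_im : (scaleDeriv f ε x).im = -((deltaP f ε x - deltaM f ε x) / 2) := by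
  simp [scaleDeriv]

theorem deltaP_add_deltaM : deltaP f ε x + deltaM f ε x = (f (x + ε) - f (x - ε)) / ε := by
  simp only [deltaP, deltaM]
  ring

theorem deltaP_sub_deltaM :
    deltaP f ε x - deltaM f ε x = (f (x + ε) + f (x - ε) - 2 * f x) / ε := by
  simp only [deltaP, deltaM]
  ring

theorem scaleDeriv_of_deltaP_eq_deltaM {f : ℝ → ℝ} {ε x : ℝ} (h : deltaP f ε x = deltaM f ε x) :
    scaleDeriv f ε x = deltaP f ε x := by
  simp [scaleDeriv, h]

theorem scaleDeriv_re_zero_of_even {f : ℝ → ℝ} (hf : Function.Even f) (ε : ℝ) :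
    (scaleDeriv f ε 0).re = 0 := by
  rw [scaleDeriv_re, deltaP_add_deltaM, zero_add, zero_sub, hf, sub_self, zero_div, zero_div]

end ScaleDeriv

theorem abs_add_sub_abs_of_abs_le {x y : ℝ} (h : |y| ≤ |x|) : |x + y| - |x| = Real.sign x * y := by
  rcases lt_trichotomy x 0 with hx | rfl | hx
  · rw [abs_of_neg hx] at h ⊢
    rw [abs_of_nonpos (by linarith [le_abs_self y]), Real.sign_of_neg hx]
    ring
  · simp_all
  · rw [abs_of_pos hx] at h ⊢
    rw [abs_of_nonneg (by linarith [neg_abs_le y]), Real.sign_of_pos hx]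
    ring

theorem abs_add_add_abs_sub_of_abs_le {x ε : ℝ} (h : |x| ≤ ε) : |x + ε| + |x - ε| = 2 * ε := by
  rw [abs_le] at h
  rw [abs_of_nonneg (by linarith), abs_of_nonpos (by linarith)]
  ring

section Abs

variable {ε x : ℝ}

theorem deltaP_abs_of_le_abs (hε : 0 < ε) (h : ε ≤ |x|) : deltaP (fun t => |t|) ε x = Real.sign x := by
  rw [deltaP, abs_add_sub_abs_of_abs_le (by rwa [abs_of_pos hε]), mul_div_cancel_right₀ _ hε.ne']

theorem deltaM_abs_of_le_abs (hε : 0 < ε) (h : ε ≤ |x|) : deltaM (fun t => |t|) ε x = Real.sign x := by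
  rw [deltaM, sub_eq_add_neg x, abs_add_sub_abs_of_abs_le (by rwa [abs_neg, abs_of_pos hε]),
    mul_neg, neg_neg, mul_div_cancel_right₀ _ hε.ne']

theorem scaleDeriv_abs_of_le_abs (hε : 0 < ε) (h : ε ≤ |x|) :
    scaleDeriv (fun t => |t|) ε x = Real.sign x := by
  have hP := deltaP_abs_of_le_abs hε h
  rw [scaleDeriv_of_deltaP_eq_deltaM (hP.trans (deltaM_abs_of_le_abs hε h).symm), hP]

theorem scaleDeriv_abs_im_of_abs_le (hε : 0 < ε) (h : |x| ≤ ε) :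
    (scaleDeriv (fun t => |t|) ε x).im = -((ε - |x|) / ε) := by
  rw [scaleDeriv_im, deltaP_sub_deltaM, abs_add_add_abs_sub_of_abs_le h]
  field_simp

theorem tendsto_scaleDeriv_abs (hx : x ≠ 0) :
    Tendsto (fun e => scaleDeriv (fun t => |t|) e x) (𝓝[>] 0) (𝓝 (Real.sign x : ℂ)) := by
  refine tendsto_const_nhds.congr' ?_
  filter_upwards [Ioo_mem_nhdsGT (abs_pos.mpr hx)] with e he
  exact (scaleDeriv_abs_of_le_abs he.1 he.2.le).symm

end Abs

theorem stmt_17 (ε : ℝ) (hε : 0 < ε) :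
    (∀ x : ℝ, ε ≤ |x| → scaleDeriv (fun t => |t|) ε x = ((Real.sign x : ℝ) : ℂ)) ∧
    (∀ x : ℝ, |x| < ε → (scaleDeriv (fun t => |t|) ε x).im = -((ε - |x|) / ε)) ∧
    (∀ x : ℝ, x ≠ 0 →
      Tendsto (fun e => scaleDeriv (fun t => |t|) e x) (𝓝[>] 0)
        (𝓝 ((Real.sign x : ℝ) : ℂ))) ∧
    scaleDeriv (fun t => |t|) ε 0 = -Complex.I := by
  refine ⟨fun x => scaleDeriv_abs_of_le_abs hε, fun x hx => scaleDeriv_abs_im_of_abs_le hε hx.le,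
    fun x => tendsto_scaleDeriv_abs, Complex.ext ?_ ?_⟩
  · simpa using scaleDeriv_re_zero_of_even (fun t => abs_neg t) ε
  · simpa [hε.ne'] using scaleDeriv_abs_im_of_abs_le (x := 0) hε (by simpa using hε.le)
end
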